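/- Block matrix-vector recursion correctness: let A ∈ 𝒞^{N,M} with block ratio vectors r^L, r^U, and x ∈ ℝ^{NM} partitioned into blocks x_1,…,x_M ∈ ℝ^N. Define p_1 = A_{1,1} x_1, p_k = r^L_{k-1} ⊙ p_{k-1} + A_{k,k} x_k for k = 2,…,M, and q_M = 0, q_{k-1} = r^U_{k-1} ⊙ (q_k + A_{k,k} x_k) for k = M,…,2. Then A x = p + q, where p and q are the concatenations of the p_k and q_k. -/

import Mathlib

open Matrix Finset

/-- `A` is an L-CoLT matrix with ratio vector `r` (0-indexed; `r` has `N-1` meaningful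
nonzero entries): `A (i+1) j = r i * A i j` for `j ≤ i`, and `A i j = 0` for `i < j`. -/
def IsLCoLT {N : ℕ} (A : Matrix (Fin N) (Fin N) ℝ) (r : ℕ → ℝ) : Prop :=
  (∀ k, k + 1 < N → r k ≠ 0) ∧
  (∀ i i' j : Fin N, (i' : ℕ) = (i : ℕ) + 1 → (j : ℕ) ≤ (i : ℕ) → A i' j = r i * A i j) ∧
  (∀ i j : Fin N, (i : ℕ) < (j : ℕ) → A i j = 0)

/-- `A` is a U-CoLT matrix with ratio vector `r'` (0-indexed; `r'` has `N-2` meaningful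
nonzero entries): `A (i-1) j = r' (i-1) * A i j` for `i < j`, and `A i j = 0` for `j ≤ i`. -/
def IsUCoLT {N : ℕ} (A : Matrix (Fin N) (Fin N) ℝ) (r' : ℕ → ℝ) : Prop :=
  (∀ k, k + 2 < N → r' k ≠ 0) ∧
  (∀ i i' j : Fin N, (i : ℕ) = (i' : ℕ) + 1 → (i : ℕ) < (j : ℕ) → A i' j = r' i' * A i j) ∧
  (∀ i j : Fin N, (j : ℕ) ≤ (i : ℕ) → A i j = 0)

/-- The set 𝒞^N: sums of an L-CoLT and a U-CoLT matrix. -/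
def InCN {N : ℕ} (M : Matrix (Fin N) (Fin N) ℝ) : Prop :=
  ∃ A B : Matrix (Fin N) (Fin N) ℝ,
    (∃ r, IsLCoLT A r) ∧ (∃ r', IsUCoLT B r') ∧ M = A + B

/-- The block set 𝒞^{N,M}: an MN×MN block matrix (indexed by Fin M × Fin N, first
component the block index) whose diagonal blocks lie in 𝒞^N and whose blocks satisfy
A_{i+1,j} = diag(r^L_i) A_{i,j} for j ≤ i and A_{i-1,j} = diag(r^U_{i-1}) A_{i,j} for
i ≤ j, with the block ratio vectors r^L, r^U ∈ (ℝ\{0})^{(M-1)N}. -/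
def IsBlockCoLT {N M : ℕ} (A : Matrix (Fin M × Fin N) (Fin M × Fin N) ℝ)
    (rL rU : ℕ → Fin N → ℝ) : Prop :=
  (∀ k : Fin M, InCN ((fun a b => A (k, a) (k, b)) : Matrix (Fin N) (Fin N) ℝ)) ∧
  (∀ k, k + 1 < M → ∀ a, rL k a ≠ 0) ∧
  (∀ k, k + 1 < M → ∀ a, rU k a ≠ 0) ∧
  (∀ i i' j : Fin M, (i' : ℕ) = (i : ℕ) + 1 → (j : ℕ) ≤ (i : ℕ) → ∀ a b : Fin N,
    A (i', a) (j, b) = rL (i : ℕ) a * A (i, a) (j, b)) ∧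
  (∀ i i' j : Fin M, (i : ℕ) = (i' : ℕ) + 1 → (i : ℕ) ≤ (j : ℕ) → ∀ a b : Fin N,
    A (i', a) (j, b) = rU (i' : ℕ) a * A (i, a) (j, b))

/-- The k-th diagonal block of A (the zero matrix if k ≥ M). -/
def dblk {N M : ℕ} (A : Matrix (Fin M × Fin N) (Fin M × Fin N) ℝ) (k : ℕ) :
    Matrix (Fin N) (Fin N) ℝ :=
  if h : k < M then (fun a b => A (⟨k, h⟩, a) (⟨k, h⟩, b)) else 0

/-- The k-th block of a vector x ∈ ℝ^{MN} (zero if k ≥ M). -/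
def xblk {N M : ℕ} (x : Fin M × Fin N → ℝ) (k : ℕ) : Fin N → ℝ :=
  if h : k < M then (fun a => x (⟨k, h⟩, a)) else 0

/-- The forward block recursion: p_0 = A_{0,0} x_0, p_{k+1} = r^L_k ⊙ p_k + A_{k+1,k+1} x_{k+1}. -/
def pBlk {N M : ℕ} (A : Matrix (Fin M × Fin N) (Fin M × Fin N) ℝ)
    (x : Fin M × Fin N → ℝ) (rL : ℕ → Fin N → ℝ) : ℕ → Fin N → ℝ
  | 0 => (dblk A 0).mulVec (xblk x 0)
  | k + 1 => fun a =>
      rL k a * pBlk A x rL k a + (dblk A (k + 1)).mulVec (xblk x (k + 1)) a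

/-- The backward block recursion, indexed by the distance d from the last block row:
qBlk d = q_{(M-1)-d}, with q_{M-1} = 0 and q_{k-1} = r^U_{k-1} ⊙ (q_k + A_{k,k} x_k). -/
def qBlk {N M : ℕ} (A : Matrix (Fin M × Fin N) (Fin M × Fin N) ℝ)
    (x : Fin M × Fin N → ℝ) (rU : ℕ → Fin N → ℝ) : ℕ → Fin N → ℝ
  | 0 => 0
  | d + 1 => fun a =>
      rU (M - 1 - (d + 1)) a *
        (qBlk A x rU d a + (dblk A (M - 1 - d)).mulVec (xblk x (M - 1 - d)) a)

/-! Split `A = L + U` into its block lower part `L` (blocks on and below the diagonal) and its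
strictly block upper part `U`. By the ratio relations, row `k + 1` of `L` is `r^L_k ⊙` row `k`
of `L` plus the diagonal block, and row `k` of `U` is `r^U_k ⊙` (row `k + 1` of `U` plus the
diagonal block). Applied to `x` these are exactly the recursions defining `p` and `q`, so by
induction `p = L x` and `q = U x`. -/

namespace Matrix

variable {m ι κ α : Type*} [LinearOrder m]

def blockLower [Zero α] (A : Matrix (m × ι) (m × κ) α) : Matrix (m × ι) (m × κ) α :=
  fun p q => if q.1 ≤ p.1 then A p q else 0

def blockStrictUpper [Zero α] (A : Matrix (m × ι) (m × κ) α) : Matrix (m × ι) (m × κ) α :=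
  fun p q => if p.1 < q.1 then A p q else 0

theorem blockLower_add_blockStrictUpper [AddZeroClass α] (A : Matrix (m × ι) (m × κ) α) :
    blockLower A + blockStrictUpper A = A := by
  ext p q
  by_cases h : q.1 ≤ p.1
  · simp [blockLower, blockStrictUpper, h, not_lt.mpr h]
  · simp [blockLower, blockStrictUpper, h, lt_of_not_ge h]

end Matrix

section BlockRecursion

variable {N M : ℕ} (A : Matrix (Fin M × Fin N) (Fin M × Fin N) ℝ) (x : Fin M × Fin N → ℝ)

def HasLowerBlockRatios (rL : ℕ → Fin N → ℝ) : Prop :=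
  ∀ i i' j : Fin M, (i' : ℕ) = (i : ℕ) + 1 → (j : ℕ) ≤ (i : ℕ) → ∀ a b : Fin N,
    A (i', a) (j, b) = rL (i : ℕ) a * A (i, a) (j, b)

def HasUpperBlockRatios (rU : ℕ → Fin N → ℝ) : Prop :=
  ∀ i i' j : Fin M, (i : ℕ) = (i' : ℕ) + 1 → (i : ℕ) ≤ (j : ℕ) → ∀ a b : Fin N,
    A (i', a) (j, b) = rU (i' : ℕ) a * A (i, a) (j, b)

theorem dblk_mulVec_xblk {k : ℕ} (hk : k < M) (a : Fin N) :
    (dblk A k *ᵥ xblk x k) a = ∑ q, if q.1 = ⟨k, hk⟩ then A (⟨k, hk⟩, a) q * x q else 0 := by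
  rw [Fintype.sum_prod_type, Fintype.sum_eq_single ⟨k, hk⟩ (fun j hj => by simp [hj])]
  simp [dblk, xblk, hk, mulVec, dotProduct]

theorem blockLower_succ_row {rL : ℕ → Fin N → ℝ} (hL : HasLowerBlockRatios A rL)
    {i i' : Fin M} (hi : (i' : ℕ) = i + 1) (a : Fin N) (q : Fin M × Fin N) :
    blockLower A (i', a) q =
      rL i a * blockLower A (i, a) q + if q.1 = i' then A (i', a) q else 0 := by
  obtain ⟨j, b⟩ := q
  simp only [blockLower, Fin.le_def, Fin.ext_iff, hi]
  by_cases hj : (j : ℕ) ≤ i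
  · simp [hj, hL i i' j hi hj a b, show (j : ℕ) ≠ i + 1 by omega,
      show (j : ℕ) ≤ i + 1 by omega]
  · by_cases hj' : (j : ℕ) = i + 1
    · simp [hj']
    · simp [hj, hj', show ¬ (j : ℕ) ≤ i + 1 by omega]

theorem blockStrictUpper_pred_row {rU : ℕ → Fin N → ℝ} (hU : HasUpperBlockRatios A rU)
    {i i' : Fin M} (hi : (i : ℕ) = i' + 1) (a : Fin N) (q : Fin M × Fin N) :
    blockStrictUpper A (i', a) q =
      rU i' a * (blockStrictUpper A (i, a) q + if q.1 = i then A (i, a) q else 0) := by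
  obtain ⟨j, b⟩ := q
  simp only [blockStrictUpper, Fin.lt_def, Fin.ext_iff, hi]
  by_cases hj : (i' : ℕ) < j
  · have hA := hU i i' j hi (by omega) a b
    by_cases hj' : (j : ℕ) = i' + 1
    · simp [hj', hA]
    · simp [hj, hj', show (i' : ℕ) + 1 < j by omega, hA]
  · simp [hj, show ¬ (i' : ℕ) + 1 < j by omega, show (j : ℕ) ≠ i' + 1 by omega]

theorem blockLower_mulVec_succ_row {rL : ℕ → Fin N → ℝ} (hL : HasLowerBlockRatios A rL)
    {i i' : Fin M} (hi : (i' : ℕ) = i + 1) (a : Fin N) :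
    (blockLower A *ᵥ x) (i', a) =
      rL i a * (blockLower A *ᵥ x) (i, a) + (dblk A i' *ᵥ xblk x i') a := by
  rw [dblk_mulVec_xblk A x i'.isLt]
  simp only [mulVec, dotProduct, blockLower_succ_row A hL hi, add_mul, Finset.sum_add_distrib,
    Finset.mul_sum, mul_assoc, ite_mul, zero_mul]

theorem blockStrictUpper_mulVec_pred_row {rU : ℕ → Fin N → ℝ} (hU : HasUpperBlockRatios A rU)
    {i i' : Fin M} (hi : (i : ℕ) = i' + 1) (a : Fin N) :
    (blockStrictUpper A *ᵥ x) (i', a) =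
      rU i' a * ((blockStrictUpper A *ᵥ x) (i, a) + (dblk A i *ᵥ xblk x i) a) := by
  rw [dblk_mulVec_xblk A x i.isLt]
  simp only [mulVec, dotProduct, blockStrictUpper_pred_row A hU hi, add_mul,
    Finset.sum_add_distrib, Finset.mul_sum, mul_add, mul_assoc, ite_mul, zero_mul]

theorem pBlk_eq_blockLower_mulVec {rL : ℕ → Fin N → ℝ} (hL : HasLowerBlockRatios A rL)
    (k : ℕ) (hk : k < M) (a : Fin N) :
    pBlk A x rL k a = (blockLower A *ᵥ x) (⟨k, hk⟩, a) := by
  induction k with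
  | zero =>
    rw [pBlk, dblk_mulVec_xblk A x hk]
    refine Finset.sum_congr rfl fun q _ => ?_
    simp [blockLower, Fin.le_def, Fin.ext_iff]
  | succ k ih =>
    rw [blockLower_mulVec_succ_row A x hL (i := ⟨k, by omega⟩) rfl, ← ih]
    rfl

theorem qBlk_eq_blockStrictUpper_mulVec {rU : ℕ → Fin N → ℝ} (hU : HasUpperBlockRatios A rU)
    (d : ℕ) (hd : d < M) (a : Fin N) :
    qBlk A x rU d a = (blockStrictUpper A *ᵥ x) (⟨M - 1 - d, by omega⟩, a) := by
  induction d with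
  | zero =>
    refine (Finset.sum_eq_zero fun q _ => ?_).symm
    simp [blockStrictUpper, Fin.lt_def, show ¬ M - 1 < (q.1 : ℕ) by omega]
  | succ d ih =>
    rw [blockStrictUpper_mulVec_pred_row A x hU (i := ⟨M - 1 - d, by omega⟩)
      (by simp only; omega), ← ih (by omega)]
    rfl

end BlockRecursion

/-- the block recursions compute the matrix-vector product: A x = p + q. -/
theorem stmt17 {N M : ℕ} (A : Matrix (Fin M × Fin N) (Fin M × Fin N) ℝ)
    (rL rU : ℕ → Fin N → ℝ) (x : Fin M × Fin N → ℝ)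
    (hA : IsBlockCoLT A rL rU) :
    A.mulVec x = fun p =>
      pBlk A x rL (p.1 : ℕ) p.2 + qBlk A x rU (M - 1 - (p.1 : ℕ)) p.2 := by
  obtain ⟨-, -, -, hL, hU⟩ := hA
  funext ⟨i, a⟩
  rw [pBlk_eq_blockLower_mulVec A x hL i i.isLt,
    qBlk_eq_blockStrictUpper_mulVec A x hU _ (by omega)]
  conv_lhs => rw [← blockLower_add_blockStrictUpper A, add_mulVec]
  simp only [Pi.add_apply, Nat.sub_sub_self (Nat.le_sub_one_of_lt i.isLt)]
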